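/- The one-soliton solution q₁(x,t) = 2c₁e^{θ-θ*}(k* - k)/(e^{-(θ+θ*)} - ρ e^{θ+θ*}), q₂(x,t) = 2d₁e^{θ-θ*}(k* - k)/(e^{-(θ+θ*)} - ρ e^{θ+θ*}), with θ = -ikx - ik²t, ρ = |c₁|² - |d₁|², and Im(k) ≠ 0, satisfies the mixed coupled NLS system iq₁t + (1/2)q₁xx + (|q₂|² - |q₁|²)q₁ = 0 and iq₂t + (1/2)q₂xx + (|q₂|² - |q₁|²)q₂ = 0, on the domain where the denominator is nonzero. -/

import Mathlib

/-!
With `φ = θ + θ*` (real, affine in `x, t`) and `ψ = θ - θ*` (imaginary, affine in `x, t`), each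
component is `C e^ψ / D(φ)` where `D = e^{-φ} - ρ e^φ`. Together with `P = e^{-φ} + ρ e^φ` one has
`D' = -P`, `P' = -D` and `P² - D² = 4ρ`. Hence for `u = C e^{bx + Bt} / D(ax + At)` the logarithmic
derivatives are `u_x / u = b + a P/D`, `u_t / u = B + A P/D`, and `(P/D)_x = 4ρa / D²`, so
`i u_t + u_xx / 2 - (4ρa²/D²) u = u ((iB + (a² + b²)/2) + (iA + ab) P/D)`, which vanishes because
the phases of the soliton satisfy the dispersion relations `iA + ab = 0`, `2iB + a² + b² = 0`.
Finally `|e^ψ| = 1` and `|k* - k|² = a²`, so `|q₂|² - |q₁|² = -4ρa²/D²`.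
-/

open Complex

/-- `θ(x,t) = -ikx - ik²t`. -/
noncomputable def theta (k : ℂ) (x t : ℝ) : ℂ := -Complex.I * k * x - Complex.I * k ^ 2 * t

/-- The denominator `e^{-(θ+θ*)} - ρ e^{θ+θ*}`. -/
noncomputable def denom (k : ℂ) (ρ : ℝ) (x t : ℝ) : ℂ :=
  Complex.exp (-(theta k x t + (starRingEnd ℂ) (theta k x t))) -
    (ρ : ℂ) * Complex.exp (theta k x t + (starRingEnd ℂ) (theta k x t))

/-- The one-soliton component with amplitude `c`. -/
noncomputable def soliton (k : ℂ) (c : ℂ) (ρ : ℝ) (x t : ℝ) : ℂ :=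
  2 * c * Complex.exp (theta k x t - (starRingEnd ℂ) (theta k x t)) * ((starRingEnd ℂ) k - k) /
    denom k ρ x t

open ComplexConjugate

noncomputable def expSubMul (ρ z : ℂ) : ℂ := exp (-z) - ρ * exp z

noncomputable def expAddMul (ρ z : ℂ) : ℂ := exp (-z) + ρ * exp z

section Hyperbolic

variable (ρ z : ℂ)

lemma expAddMul_sq_sub_expSubMul_sq : expAddMul ρ z ^ 2 - expSubMul ρ z ^ 2 = 4 * ρ := by
  have h : exp (-z) * exp z = 1 := by rw [← exp_add, neg_add_cancel, exp_zero]
  unfold expAddMul expSubMul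
  linear_combination 4 * ρ * h

lemma hasDerivAt_exp_neg : HasDerivAt (fun w => exp (-w)) (-exp (-z)) z := by
  simpa using (hasDerivAt_neg z).cexp

lemma hasDerivAt_expSubMul : HasDerivAt (expSubMul ρ) (-expAddMul ρ z) z :=
  ((hasDerivAt_exp_neg z).sub ((hasDerivAt_exp z).const_mul ρ)).congr_deriv
    (by rw [expAddMul]; ring)

lemma hasDerivAt_expAddMul : HasDerivAt (expAddMul ρ) (-expSubMul ρ z) z :=
  ((hasDerivAt_exp_neg z).add ((hasDerivAt_exp z).const_mul ρ)).congr_deriv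
    (by rw [expSubMul]; ring)

lemma expSubMul_ofReal (r ρ : ℝ) :
    expSubMul ρ r = ((Real.exp (-r) - ρ * Real.exp r : ℝ) : ℂ) := by
  simp [expSubMul]

end Hyperbolic

section AlongLine

variable (C ρ a a₀ b b₀ : ℂ) {s : ℝ}

lemma hasDerivAt_affine (s : ℝ) : HasDerivAt (fun s : ℝ => a * s + a₀) a s := by
  simpa using ((hasDerivAt_id (s : ℂ)).comp_ofReal).const_mul a |>.add_const a₀

lemma hasDerivAt_expSubMul_affine (s : ℝ) :
    HasDerivAt (fun s : ℝ => expSubMul ρ (a * s + a₀)) (-expAddMul ρ (a * s + a₀) * a) s :=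
  (hasDerivAt_expSubMul ρ _).comp s (hasDerivAt_affine a a₀ s)

lemma hasDerivAt_expAddMul_affine (s : ℝ) :
    HasDerivAt (fun s : ℝ => expAddMul ρ (a * s + a₀)) (-expSubMul ρ (a * s + a₀) * a) s :=
  (hasDerivAt_expAddMul ρ _).comp s (hasDerivAt_affine a a₀ s)

lemma hasDerivAt_exp_div_expSubMul (h : expSubMul ρ (a * s + a₀) ≠ 0) :
    HasDerivAt (fun s : ℝ => C * exp (b * s + b₀) / expSubMul ρ (a * s + a₀))
      (C * exp (b * s + b₀) / expSubMul ρ (a * s + a₀) *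
        (b + a * (expAddMul ρ (a * s + a₀) / expSubMul ρ (a * s + a₀)))) s := by
  have hN := ((hasDerivAt_affine b b₀ s).cexp).const_mul C
  refine (hN.div (hasDerivAt_expSubMul_affine ρ a a₀ s) h).congr_deriv ?_
  generalize expSubMul ρ (a * s + a₀) = D at h ⊢
  field_simp
  ring

lemma hasDerivAt_expAddMul_div_expSubMul (h : expSubMul ρ (a * s + a₀) ≠ 0) :
    HasDerivAt (fun s : ℝ => expAddMul ρ (a * s + a₀) / expSubMul ρ (a * s + a₀))
      (a * (4 * ρ / expSubMul ρ (a * s + a₀) ^ 2)) s := by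
  refine ((hasDerivAt_expAddMul_affine ρ a a₀ s).div
    (hasDerivAt_expSubMul_affine ρ a a₀ s) h).congr_deriv ?_
  rw [← expAddMul_sq_sub_expSubMul_sq]
  ring

lemma deriv_deriv_exp_div_expSubMul (h : expSubMul ρ (a * s + a₀) ≠ 0) :
    deriv (fun s' : ℝ => deriv
        (fun s'' : ℝ => C * exp (b * s'' + b₀) / expSubMul ρ (a * s'' + a₀)) s') s =
      C * exp (b * s + b₀) / expSubMul ρ (a * s + a₀) *
        ((b + a * (expAddMul ρ (a * s + a₀) / expSubMul ρ (a * s + a₀))) ^ 2 +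
          a ^ 2 * (4 * ρ / expSubMul ρ (a * s + a₀) ^ 2)) := by
  have hcont := (hasDerivAt_expSubMul_affine ρ a a₀ s).continuousAt
  have hfirst :
      (deriv fun s'' : ℝ => C * exp (b * s'' + b₀) / expSubMul ρ (a * s'' + a₀)) =ᶠ[nhds s]
        fun s' => C * exp (b * s' + b₀) / expSubMul ρ (a * s' + a₀) *
        (b + a * (expAddMul ρ (a * s' + a₀) / expSubMul ρ (a * s' + a₀))) := by
    filter_upwards [hcont.eventually_ne h] with s' hs'
    exact (hasDerivAt_exp_div_expSubMul C ρ a a₀ b b₀ hs').deriv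
  rw [hfirst.deriv_eq]
  refine ((hasDerivAt_exp_div_expSubMul C ρ a a₀ b b₀ h).mul
    (((hasDerivAt_expAddMul_div_expSubMul ρ a a₀ h).const_mul a).const_add b)).deriv.trans ?_
  ring

end AlongLine

noncomputable def expWave (C a b A B ρ : ℂ) (x t : ℝ) : ℂ :=
  C * exp (b * x + B * t) / expSubMul ρ (a * x + A * t)

theorem expWave_mixedNLS (C a b A B ρ : ℂ) (hA : I * A + a * b = 0)
    (hB : 2 * I * B + a ^ 2 + b ^ 2 = 0) (x t : ℝ) (h0 : expSubMul ρ (a * x + A * t) ≠ 0) :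
    I * deriv (fun t' : ℝ => expWave C a b A B ρ x t') t +
        (1 / 2 : ℂ) * deriv (fun x' : ℝ => deriv (fun x'' : ℝ => expWave C a b A B ρ x'' t) x') x +
        -(4 * ρ * a ^ 2 / expSubMul ρ (a * x + A * t) ^ 2) * expWave C a b A B ρ x t = 0 := by
  set D := expSubMul ρ (a * x + A * t)
  set r := expAddMul ρ (a * x + A * t) / D
  have hswap : ∀ t' : ℝ, a * x + A * t' = A * t' + a * x := fun _ => add_comm _ _
  have ht : deriv (fun t' : ℝ => expWave C a b A B ρ x t') t =
      expWave C a b A B ρ x t * (B + A * r) := by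
    have h0' : expSubMul ρ (A * t + a * x) ≠ 0 := hswap t ▸ h0
    have := (hasDerivAt_exp_div_expSubMul C ρ A (a * x) B (b * x) h0').deriv
    simp only [expWave, r, D, hswap, add_comm (b * (x : ℂ))]
    exact this
  have hxx : deriv (fun x' : ℝ => deriv (fun x'' : ℝ => expWave C a b A B ρ x'' t) x') x =
      expWave C a b A B ρ x t * ((b + a * r) ^ 2 + a ^ 2 * (4 * ρ / D ^ 2)) :=
    deriv_deriv_exp_div_expSubMul C ρ a (A * t) b (B * t) h0
  have hr : r ^ 2 = 1 + 4 * ρ / D ^ 2 := by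
    rw [div_pow, ← expAddMul_sq_sub_expSubMul_sq]
    field_simp
    ring
  rw [ht, hxx]
  linear_combination expWave C a b A B ρ x t * (hB / 2 + r * hA + a ^ 2 / 2 * hr)

lemma norm_mul_exp_div_ofReal_sq (C w : ℂ) (hw : w.re = 0) (d : ℝ) :
    ‖C * exp w / d‖ ^ 2 = ‖C‖ ^ 2 / d ^ 2 := by
  rw [norm_div, norm_mul, norm_exp, hw, Real.exp_zero, mul_one, norm_real, Real.norm_eq_abs,
    div_pow, sq_abs]

section Soliton

variable (k : ℂ) (x t : ℝ)

lemma theta_add_conj :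
    theta k x t + conj (theta k x t) =
      ((2 * k.im : ℝ) : ℂ) * x + ((4 * k.re * k.im : ℝ) : ℂ) * t := by
  apply Complex.ext <;> simp [theta, sq]; ring

lemma theta_sub_conj :
    theta k x t - conj (theta k x t) = -2 * I * k.re * x + -2 * I * (k.re ^ 2 - k.im ^ 2) * t := by
  apply Complex.ext <;> simp [theta, sq] <;> ring

lemma denom_eq_expSubMul (ρ : ℝ) :
    denom k ρ x t = expSubMul ρ (((2 * k.im : ℝ) : ℂ) * x + ((4 * k.re * k.im : ℝ) : ℂ) * t) := by
  rw [denom, theta_add_conj, expSubMul]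

lemma soliton_eq_expWave (c : ℂ) (ρ : ℝ) :
    soliton k c ρ x t = expWave (2 * c * (conj k - k)) (2 * k.im : ℝ) (-2 * I * k.re)
      (4 * k.re * k.im : ℝ) (-2 * I * (k.re ^ 2 - k.im ^ 2)) ρ x t := by
  rw [soliton, expWave, theta_sub_conj, denom_eq_expSubMul]
  ring

lemma denom_eq_ofReal (ρ : ℝ) : denom k ρ x t =
    ((Real.exp (-(2 * k.im * x + 4 * k.re * k.im * t)) -
      ρ * Real.exp (2 * k.im * x + 4 * k.re * k.im * t) : ℝ) : ℂ) := by
  rw [denom_eq_expSubMul, ← expSubMul_ofReal]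
  push_cast
  rfl

lemma ofReal_norm_soliton_sq (c : ℂ) (ρ : ℝ) :
    ((‖soliton k c ρ x t‖ ^ 2 : ℝ) : ℂ) =
      4 * ‖c‖ ^ 2 * ((2 * k.im : ℝ) : ℂ) ^ 2 / denom k ρ x t ^ 2 := by
  have hw : (theta k x t - conj (theta k x t)).re = 0 := by simp [sub_conj]
  have hC : ‖2 * c * (conj k - k)‖ = 2 * ‖c‖ * |2 * k.im| := by
    rw [← neg_sub, sub_conj]
    simp
  rw [soliton, mul_right_comm _ (exp _), denom_eq_ofReal, norm_mul_exp_div_ofReal_sq _ _ hw, hC,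
    mul_pow, sq_abs]
  push_cast
  ring

end Soliton

theorem one_soliton_solves_mCNLS_general (k : ℂ) (c1 d1 : ℂ) :
    ∀ x t : ℝ, denom k (‖c1‖ ^ 2 - ‖d1‖ ^ 2) x t ≠ 0 →
      (Complex.I * deriv (fun t' : ℝ =>
            soliton k c1 (‖c1‖ ^ 2 - ‖d1‖ ^ 2) x t') t +
          (1 / 2 : ℂ) * deriv (fun x' : ℝ => deriv (fun x'' : ℝ =>
            soliton k c1 (‖c1‖ ^ 2 - ‖d1‖ ^ 2) x'' t) x') x +
          ((‖soliton k d1 (‖c1‖ ^ 2 - ‖d1‖ ^ 2) x t‖ ^ 2 -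
              ‖soliton k c1 (‖c1‖ ^ 2 - ‖d1‖ ^ 2) x t‖ ^ 2 :
              ℝ) : ℂ) *
            soliton k c1 (‖c1‖ ^ 2 - ‖d1‖ ^ 2) x t = 0) ∧
      (Complex.I * deriv (fun t' : ℝ =>
            soliton k d1 (‖c1‖ ^ 2 - ‖d1‖ ^ 2) x t') t +
          (1 / 2 : ℂ) * deriv (fun x' : ℝ => deriv (fun x'' : ℝ =>
            soliton k d1 (‖c1‖ ^ 2 - ‖d1‖ ^ 2) x'' t) x') x +
          ((‖soliton k d1 (‖c1‖ ^ 2 - ‖d1‖ ^ 2) x t‖ ^ 2 -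
              ‖soliton k c1 (‖c1‖ ^ 2 - ‖d1‖ ^ 2) x t‖ ^ 2 :
              ℝ) : ℂ) *
            soliton k d1 (‖c1‖ ^ 2 - ‖d1‖ ^ 2) x t = 0) := by
  intro x t h0
  have hcoef : ((‖soliton k d1 (‖c1‖ ^ 2 - ‖d1‖ ^ 2) x t‖ ^ 2 -
      ‖soliton k c1 (‖c1‖ ^ 2 - ‖d1‖ ^ 2) x t‖ ^ 2 : ℝ) : ℂ) =
      -(4 * ((‖c1‖ ^ 2 - ‖d1‖ ^ 2 : ℝ) : ℂ) * ((2 * k.im : ℝ) : ℂ) ^ 2 /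
        denom k (‖c1‖ ^ 2 - ‖d1‖ ^ 2) x t ^ 2) := by
    rw [ofReal_sub, ofReal_norm_soliton_sq, ofReal_norm_soliton_sq]
    push_cast
    ring
  have hA : I * ((4 * k.re * k.im : ℝ) : ℂ) + ((2 * k.im : ℝ) : ℂ) * (-2 * I * k.re) = 0 := by
    push_cast
    ring
  have hB : 2 * I * (-2 * I * (k.re ^ 2 - k.im ^ 2)) + ((2 * k.im : ℝ) : ℂ) ^ 2 +
      (-2 * I * k.re) ^ 2 = 0 := by
    push_cast
    linear_combination 4 * (k.im : ℂ) ^ 2 * I_sq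
  rw [denom_eq_expSubMul] at h0
  rw [hcoef, denom_eq_expSubMul]
  simp only [soliton_eq_expWave]
  exact ⟨expWave_mixedNLS _ _ _ _ _ _ hA hB x t h0, expWave_mixedNLS _ _ _ _ _ _ hA hB x t h0⟩

/-- The one-soliton solution satisfies the mixed coupled NLS system wherever the
denominator is nonzero. -/
theorem one_soliton_solves_mCNLS (k : ℂ) (hk : k.im ≠ 0) (c1 d1 : ℂ) :
    ∀ x t : ℝ, denom k (‖c1‖ ^ 2 - ‖d1‖ ^ 2) x t ≠ 0 →
      (Complex.I * deriv (fun t' : ℝ =>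
            soliton k c1 (‖c1‖ ^ 2 - ‖d1‖ ^ 2) x t') t +
          (1 / 2 : ℂ) * deriv (fun x' : ℝ => deriv (fun x'' : ℝ =>
            soliton k c1 (‖c1‖ ^ 2 - ‖d1‖ ^ 2) x'' t) x') x +
          ((‖soliton k d1 (‖c1‖ ^ 2 - ‖d1‖ ^ 2) x t‖ ^ 2 -
              ‖soliton k c1 (‖c1‖ ^ 2 - ‖d1‖ ^ 2) x t‖ ^ 2 :
              ℝ) : ℂ) *
            soliton k c1 (‖c1‖ ^ 2 - ‖d1‖ ^ 2) x t = 0) ∧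
      (Complex.I * deriv (fun t' : ℝ =>
            soliton k d1 (‖c1‖ ^ 2 - ‖d1‖ ^ 2) x t') t +
          (1 / 2 : ℂ) * deriv (fun x' : ℝ => deriv (fun x'' : ℝ =>
            soliton k d1 (‖c1‖ ^ 2 - ‖d1‖ ^ 2) x'' t) x') x +
          ((‖soliton k d1 (‖c1‖ ^ 2 - ‖d1‖ ^ 2) x t‖ ^ 2 -
              ‖soliton k c1 (‖c1‖ ^ 2 - ‖d1‖ ^ 2) x t‖ ^ 2 :
              ℝ) : ℂ) *
            soliton k d1 (‖c1‖ ^ 2 - ‖d1‖ ^ 2) x t = 0) :=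
  one_soliton_solves_mCNLS_general k c1 d1
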